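/- The second derivative of ξ(t) = (cos²t + 2t·sin t·cos t + t² − π²/4)/cos²t is strictly positive on (−π/2, π/2); in particular ξ is strictly convex on this interval. -/

import Mathlib

/-!
Writing `ξ = N / cos²` with `N t = cos² t + 2t sin t cos t + t² − π²/4`, one finds `N' = 4t cos² t`,
hence `ξ'' = F / cos⁴` with `F t = 6 cos² t + 12 t sin t cos t + 2 (t² − π²/4)(2 sin² t + 1)`.
`F` is even, vanishes at `π/2`, and `F' = −8 cos · φ` with `φ t = (π²/4 − t²) sin t − 2t cos t`.
Since `φ' = (π²/4 − 2 − t²) cos`, `φ` rises and then falls on `[0, π/2]`, where it vanishes at both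
ends; so `φ > 0` on `(0, π/2)`, `F` decreases strictly there, and `F > 0` on `(−π/2, π/2)`.
-/

open Real Set

noncomputable def xi (t : ℝ) : ℝ :=
  (Real.cos t ^ 2 + 2 * t * Real.sin t * Real.cos t + t ^ 2 - Real.pi ^ 2 / 4) / Real.cos t ^ 2

theorem lt_of_strictMonoOn_of_strictAntiOn {α β : Type*} [LinearOrder α] [Preorder β]
    {f : α → β} {a b c t : α} (hmono : StrictMonoOn f (Icc a c)) (hanti : StrictAntiOn f (Icc c b))
    (hab : f a = f b) (ht : t ∈ Ioo a b) : f a < f t := by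
  rcases le_or_gt t c with htc | hct
  · exact hmono ⟨le_rfl, ht.1.le.trans htc⟩ ⟨ht.1.le, htc⟩ ht.1
  · rw [hab]
    exact hanti ⟨hct.le, ht.2.le⟩ ⟨(hct.trans ht.2).le, le_rfl⟩ ht.2

section Monotone

variable {f f' : ℝ → ℝ} {a b : ℝ}

theorem strictMonoOn_Icc_of_hasDerivAt_pos (hf : ∀ x, HasDerivAt f (f' x) x)
    (hpos : ∀ x ∈ Ioo a b, 0 < f' x) : StrictMonoOn f (Icc a b) :=
  strictMonoOn_of_deriv_pos (convex_Icc a b)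
    (continuous_iff_continuousAt.2 fun x => (hf x).continuousAt).continuousOn fun x hx => by
      rw [interior_Icc] at hx
      rw [(hf x).deriv]
      exact hpos x hx

theorem strictAntiOn_Icc_of_hasDerivAt_neg (hf : ∀ x, HasDerivAt f (f' x) x)
    (hneg : ∀ x ∈ Ioo a b, f' x < 0) : StrictAntiOn f (Icc a b) :=
  strictAntiOn_of_deriv_neg (convex_Icc a b)
    (continuous_iff_continuousAt.2 fun x => (hf x).continuousAt).continuousOn fun x hx => by
      rw [interior_Icc] at hx
      rw [(hf x).deriv]
      exact hneg x hx

end Monotone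

noncomputable def xiNum (t : ℝ) : ℝ :=
  cos t ^ 2 + 2 * t * sin t * cos t + t ^ 2 - π ^ 2 / 4

noncomputable def xiDeriv (t : ℝ) : ℝ :=
  4 * t + 2 * sin t * xiNum t / cos t ^ 3

noncomputable def xiDeriv2Num (t : ℝ) : ℝ :=
  6 * cos t ^ 2 + 12 * t * sin t * cos t + 2 * (t ^ 2 - π ^ 2 / 4) * (2 * sin t ^ 2 + 1)

noncomputable def xiPhi (t : ℝ) : ℝ :=
  (π ^ 2 / 4 - t ^ 2) * sin t - 2 * t * cos t

theorem hasDerivAt_xiNum (t : ℝ) : HasDerivAt xiNum (4 * t * cos t ^ 2) t := by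
  have h := ((((hasDerivAt_cos t).pow 2).add ((((hasDerivAt_id t).const_mul 2).mul
    (hasDerivAt_sin t)).mul (hasDerivAt_cos t))).add ((hasDerivAt_id t).pow 2)).sub_const (π ^ 2 / 4)
  refine h.congr_deriv ?_
  simp only [id_eq, Nat.cast_ofNat, Pi.mul_apply]
  linear_combination (-2 * t) * sin_sq_add_cos_sq t

theorem hasDerivAt_xi {t : ℝ} (hc : cos t ≠ 0) : HasDerivAt xi (xiDeriv t) t := by
  refine ((hasDerivAt_xiNum t).div ((hasDerivAt_cos t).pow 2) (pow_ne_zero 2 hc)).congr_deriv ?_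
  simp only [Nat.cast_ofNat, Pi.pow_apply]
  rw [xiDeriv]
  field_simp
  ring

theorem hasDerivAt_xiDeriv {t : ℝ} (hc : cos t ≠ 0) :
    HasDerivAt xiDeriv (xiDeriv2Num t / cos t ^ 4) t := by
  have h := ((hasDerivAt_id t).const_mul 4).add ((((hasDerivAt_sin t).const_mul 2).mul
    (hasDerivAt_xiNum t)).div ((hasDerivAt_cos t).pow 3) (pow_ne_zero 3 hc))
  refine h.congr_deriv ?_
  simp only [Nat.cast_ofNat, Pi.mul_apply, Pi.pow_apply]
  rw [xiDeriv2Num, xiNum]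
  field_simp
  linear_combination (8 * t ^ 2 * cos t ^ 2 - 2 * π ^ 2 * cos t ^ 2
    + 48 * t * sin t * cos t ^ 3 + 24 * cos t ^ 4) * sin_sq_add_cos_sq t

theorem hasDerivAt_xiDeriv2Num (t : ℝ) :
    HasDerivAt xiDeriv2Num (-8 * cos t * xiPhi t) t := by
  have h := ((((hasDerivAt_cos t).pow 2).const_mul 6).add
      ((((hasDerivAt_id t).const_mul 12).mul (hasDerivAt_sin t)).mul (hasDerivAt_cos t))).add
      (((((hasDerivAt_id t).pow 2).sub_const (π ^ 2 / 4)).const_mul 2).mul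
        ((((hasDerivAt_sin t).pow 2).const_mul 2).add_const 1))
  refine h.congr_deriv ?_
  simp only [id_eq, Nat.cast_ofNat, Pi.mul_apply, Pi.pow_apply]
  rw [xiPhi]
  linear_combination (-4 * t) * sin_sq_add_cos_sq t

theorem hasDerivAt_xiPhi (t : ℝ) :
    HasDerivAt xiPhi ((π ^ 2 / 4 - 2 - t ^ 2) * cos t) t := by
  have h := ((((hasDerivAt_id t).pow 2).const_sub (π ^ 2 / 4)).mul (hasDerivAt_sin t)).sub
    (((hasDerivAt_id t).const_mul 2).mul (hasDerivAt_cos t))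
  refine h.congr_deriv ?_
  simp only [id_eq, Nat.cast_ofNat, Pi.pow_apply]
  ring

theorem xiDeriv2Num_neg (t : ℝ) : xiDeriv2Num (-t) = xiDeriv2Num t := by
  simp only [xiDeriv2Num, sin_neg, cos_neg]
  ring

theorem xiPhi_pos {t : ℝ} (ht : t ∈ Ioo 0 (π / 2)) : 0 < xiPhi t := by
  have hpi := pi_gt_three
  -- the critical point of `xiPhi` in `(0, π / 2)`
  set c := √(π ^ 2 / 4 - 2)
  have hc_sq : c ^ 2 = π ^ 2 / 4 - 2 := sq_sqrt (by nlinarith)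
  have hc : 0 ≤ c := sqrt_nonneg _
  have hmono : StrictMonoOn xiPhi (Icc 0 c) :=
    strictMonoOn_Icc_of_hasDerivAt_pos hasDerivAt_xiPhi fun x hx => by
      have hcos : 0 < cos x := cos_pos_of_mem_Ioo ⟨by linarith [hx.1], by nlinarith [hx.1, hx.2]⟩
      exact mul_pos (by nlinarith [hx.1, hx.2]) hcos
  have hanti : StrictAntiOn xiPhi (Icc c (π / 2)) :=
    strictAntiOn_Icc_of_hasDerivAt_neg hasDerivAt_xiPhi fun x hx => by
      have hcos : 0 < cos x := cos_pos_of_mem_Ioo ⟨by linarith [hx.1], hx.2⟩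
      exact mul_neg_of_neg_of_pos (by nlinarith [hx.1]) hcos
  have h0 : xiPhi 0 = 0 := by simp [xiPhi]
  have hpi2 : xiPhi (π / 2) = 0 := by
    rw [xiPhi, sin_pi_div_two, cos_pi_div_two]; ring
  simpa [h0] using lt_of_strictMonoOn_of_strictAntiOn hmono hanti (h0.trans hpi2.symm) ht

theorem xiDeriv2Num_pos_of_nonneg {t : ℝ} (ht0 : 0 ≤ t) (ht : t < π / 2) : 0 < xiDeriv2Num t := by
  have hanti : StrictAntiOn xiDeriv2Num (Icc 0 (π / 2)) :=
    strictAntiOn_Icc_of_hasDerivAt_neg hasDerivAt_xiDeriv2Num fun x hx => by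
      have hcos : 0 < cos x := cos_pos_of_mem_Ioo ⟨by linarith [hx.1, pi_pos], hx.2⟩
      nlinarith [mul_pos hcos (xiPhi_pos hx)]
  have hpi2 : xiDeriv2Num (π / 2) = 0 := by
    rw [xiDeriv2Num, sin_pi_div_two, cos_pi_div_two]; ring
  simpa [hpi2] using hanti ⟨ht0, ht.le⟩ ⟨by positivity, le_rfl⟩ ht

theorem xiDeriv2Num_pos {t : ℝ} (ht : t ∈ Ioo (-(π / 2)) (π / 2)) : 0 < xiDeriv2Num t := by
  rcases le_or_gt 0 t with ht0 | ht0
  · exact xiDeriv2Num_pos_of_nonneg ht0 ht.2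
  · simpa [xiDeriv2Num_neg] using xiDeriv2Num_pos_of_nonneg (neg_nonneg.2 ht0.le) (by linarith [ht.1])

theorem xi_second_deriv_pos :
    (∀ t ∈ Ioo (-(Real.pi / 2)) (Real.pi / 2), 0 < deriv (deriv xi) t) ∧
    StrictConvexOn ℝ (Ioo (-(Real.pi / 2)) (Real.pi / 2)) xi := by
  have hcos : ∀ x ∈ Ioo (-(π / 2)) (π / 2), cos x ≠ 0 := fun x hx => (cos_pos_of_mem_Ioo hx).ne'
  have hderiv2 : ∀ t ∈ Ioo (-(π / 2)) (π / 2), 0 < deriv (deriv xi) t := by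
    intro t ht
    have hxi' : deriv xi =ᶠ[nhds t] xiDeriv := by
      filter_upwards [isOpen_Ioo.mem_nhds ht] with x hx
      exact (hasDerivAt_xi (hcos x hx)).deriv
    rw [hxi'.deriv_eq, (hasDerivAt_xiDeriv (hcos t ht)).deriv]
    exact div_pos (xiDeriv2Num_pos ht) (pow_pos (cos_pos_of_mem_Ioo ht) 4)
  refine ⟨hderiv2, strictConvexOn_of_deriv2_pos' (convex_Ioo _ _) ?_ hderiv2⟩
  exact fun x hx => (hasDerivAt_xi (hcos x hx)).continuousAt.continuousWithinAt
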